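/- arXiv:0911.3975 — 3 statements merged into one kernel-verified Lean document; each statement's English description precedes it below -/
import Mathlib

section
/- Let G be a group, H a Hilbert space, π : G → U(H) a map, c : G → H a map, and δ ≥ 0 such that ‖c(gh) − (c(g) + π(g)c(h))‖ ≤ δ for all g, h ∈ G. Define θ(x,y) = exp(−‖c(x) − c(y)‖²). Then for all g, x, y ∈ G, |θ(g⁻¹x, g⁻¹y) − θ(x,y)| ≤ 2√(2 − 2exp(−δ²)). -/
/-!
Since `c (g * h)` lies within `δ` of `c g + π g (c h)`, the points `c x`, `c y` lie within `δ` of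
`c g + π g (c (g⁻¹ * x))`, `c g + π g (c (g⁻¹ * y))`, an isometric copy of `c (g⁻¹ * x)`,
`c (g⁻¹ * y)`. Hence the distances `‖c (g⁻¹ * x) - c (g⁻¹ * y)‖` and `‖c x - c y‖` differ by at
most `2δ`. The Gaussian `t ↦ exp (-t²)` takes values in `(0, 1]` and is `1`-Lipschitz, which gives
`|exp (-p²) - exp (-q²)| ≤ √(2 - 2 exp (-δ²))` whenever `|p - q| ≤ δ`; splitting a gap of `2δ`
at its midpoint yields the factor `2`.
-/

section Gaussian

open Real

lemma lipschitzWith_one_exp_neg_sq : LipschitzWith 1 fun t : ℝ => exp (-t ^ 2) := by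
  have hderiv (t : ℝ) :
      HasDerivAt (fun s : ℝ => exp (-s ^ 2)) (exp (-t ^ 2) * -(2 * t)) t := by
    simpa using (hasDerivAt_pow 2 t).neg.exp
  refine lipschitzWith_of_nnnorm_deriv_le (fun t => (hderiv t).differentiableAt) fun t => ?_
  rw [(hderiv t).deriv, ← NNReal.coe_le_coe, coe_nnnorm, NNReal.coe_one, norm_mul, norm_neg,
    norm_mul, Real.norm_of_nonneg (exp_pos _).le, Real.norm_two, Real.norm_eq_abs]
  have htwo : 2 * |t| ≤ exp (t ^ 2) := by
    nlinarith [two_mul_le_add_sq |t| 1, sq_abs t, add_one_le_exp (t ^ 2)]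
  calc exp (-t ^ 2) * (2 * |t|) ≤ exp (-t ^ 2) * exp (t ^ 2) := by gcongr
    _ = 1 := by rw [← exp_add, neg_add_cancel, exp_zero]

lemma abs_exp_neg_sq_sub_exp_neg_sq_le {p q δ : ℝ} (h : |p - q| ≤ δ) :
    |exp (-p ^ 2) - exp (-q ^ 2)| ≤ √(2 - 2 * exp (-δ ^ 2)) := by
  rcases le_or_gt (exp (-δ ^ 2)) (1 / 2) with hδ_large | hδ_small
  · have hp : exp (-p ^ 2) ≤ 1 := exp_le_one_iff.mpr (neg_nonpos.mpr (sq_nonneg p))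
    have hq : exp (-q ^ 2) ≤ 1 := exp_le_one_iff.mpr (neg_nonpos.mpr (sq_nonneg q))
    calc |exp (-p ^ 2) - exp (-q ^ 2)| ≤ 1 :=
          abs_sub_le_iff.mpr ⟨by linarith [exp_pos (-q ^ 2)], by linarith [exp_pos (-p ^ 2)]⟩
      _ ≤ √(2 - 2 * exp (-δ ^ 2)) := one_le_sqrt.mpr (by linarith)
  · -- `2 - 2 exp (-s) = 2 exp (-s) (exp s - 1) ≥ exp s - 1 ≥ s` once `exp (-s) > 1/2`
    have hδsq : δ ^ 2 ≤ 2 - 2 * exp (-δ ^ 2) := by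
      have hinv : exp (-δ ^ 2) * exp (δ ^ 2) = 1 := by rw [← exp_add, neg_add_cancel, exp_zero]
      nlinarith [add_one_le_exp (δ ^ 2)]
    calc |exp (-p ^ 2) - exp (-q ^ 2)| ≤ |p - q| := by
          simpa [Real.dist_eq] using lipschitzWith_one_exp_neg_sq.dist_le_mul p q
      _ ≤ δ := h
      _ ≤ √(2 - 2 * exp (-δ ^ 2)) := le_sqrt_of_sq_le hδsq

lemma abs_exp_neg_sq_sub_exp_neg_sq_le_two_mul {a b δ : ℝ} (h : |a - b| ≤ 2 * δ) :
    |exp (-a ^ 2) - exp (-b ^ 2)| ≤ 2 * √(2 - 2 * exp (-δ ^ 2)) := by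
  set m := (a + b) / 2
  have ham : |a - m| ≤ δ := by
    rw [show a - m = (a - b) / 2 by ring, abs_div, abs_two]; linarith
  have hmb : |m - b| ≤ δ := by
    rw [show m - b = (a - b) / 2 by ring, abs_div, abs_two]; linarith
  calc |exp (-a ^ 2) - exp (-b ^ 2)|
      ≤ |exp (-a ^ 2) - exp (-m ^ 2)| + |exp (-m ^ 2) - exp (-b ^ 2)| := abs_sub_le _ _ _
    _ ≤ 2 * √(2 - 2 * exp (-δ ^ 2)) := by
      linarith [abs_exp_neg_sq_sub_exp_neg_sq_le ham, abs_exp_neg_sq_sub_exp_neg_sq_le hmb]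

end Gaussian

theorem stmt4_general {G H : Type*} [Group G] [NormedAddCommGroup H] [InnerProductSpace ℝ H]
    (π : G → (H ≃ₗᵢ[ℝ] H)) (c : G → H) (δ : ℝ)
    (hdef : ∀ g h : G, ‖c (g * h) - (c g + π g (c h))‖ ≤ δ)
    (θ : G → G → ℝ) (hθ : ∀ x y, θ x y = Real.exp (-‖c x - c y‖ ^ 2)) :
    ∀ g x y : G,
      |θ (g⁻¹ * x) (g⁻¹ * y) - θ x y| ≤ 2 * Real.sqrt (2 - 2 * Real.exp (-δ ^ 2)) := by
  intro g x y
  have hnear (z : G) : dist (c g + π g (c (g⁻¹ * z))) (c z) ≤ δ := by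
    simpa [dist_eq_norm'] using hdef g (g⁻¹ * z)
  have hgap : |‖c (g⁻¹ * x) - c (g⁻¹ * y)‖ - ‖c x - c y‖| ≤ 2 * δ := by
    have := dist_dist_dist_le (c g + π g (c (g⁻¹ * x))) (c g + π g (c (g⁻¹ * y))) (c x) (c y)
    rw [dist_add_left, LinearIsometryEquiv.dist_map, Real.dist_eq, dist_eq_norm (c (g⁻¹ * x)),
      dist_eq_norm (c x)] at this
    linarith [hnear x, hnear y]
  rw [hθ, hθ]
  exact abs_exp_neg_sq_sub_exp_neg_sq_le_two_mul hgap

theorem stmt4 {G H : Type*} [Group G] [NormedAddCommGroup H] [InnerProductSpace ℝ H]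
    (π : G → (H ≃ₗᵢ[ℝ] H)) (c : G → H) (δ : ℝ) (hδ : 0 ≤ δ)
    (hdef : ∀ g h : G, ‖c (g * h) - (c g + π g (c h))‖ ≤ δ)
    (θ : G → G → ℝ) (hθ : ∀ x y, θ x y = Real.exp (-‖c x - c y‖ ^ 2)) :
    ∀ g x y : G,
      |θ (g⁻¹ * x) (g⁻¹ * y) - θ x y| ≤ 2 * Real.sqrt (2 - 2 * Real.exp (-δ ^ 2)) :=
  stmt4_general π c δ hdef θ hθ
end

section
/- Let G be a group, θ : G × G → ℂ a normalized positive definite kernel, ε > 0, and suppose: (a) for all g ∈ G and x, y ∈ G, |θ(g x, g y) − θ(x,y)| ≤ ε; (b) there is y ∈ G with |θ(y, 1) − 1| < ε; (c) there is x ∈ G with |θ(y⁻¹ x y, 1) − 1| < ε. Then |θ(x, 1) − 1| < 2ε + 4√ε. (Variant of Mautner's lemma.) -/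
/-!
Since `θ` is a Gram kernel of unit vectors, `θ s t ≈ 1` forces `F s ≈ F t`, with
`‖F s - F t‖ ≤ √(2 ‖θ s t - 1‖)`. Hypotheses (a) and (b) give `θ (x * y) x ≈ θ y 1 ≈ 1`, so
`F (x * y) ≈ F x` and `F y ≈ F 1`, whence `θ x 1 ≈ θ (x * y) y` up to `4 √ε`. By (a),
`θ (x * y) y = θ (y * (y⁻¹ * x * y)) (y * 1) ≈ θ (y⁻¹ * x * y) 1`, which is `ε`-close to `1` by (c).
-/

open scoped InnerProductSpace

section UnitVectors

variable {𝕜 E : Type*} [RCLike 𝕜] [NormedAddCommGroup E] [InnerProductSpace 𝕜 E]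

theorem norm_sub_sq_le_two_mul_norm_inner_sub_one {u v : E} (hu : ‖u‖ = 1) (hv : ‖v‖ = 1) :
    ‖u - v‖ ^ 2 ≤ 2 * ‖⟪u, v⟫_𝕜 - 1‖ := by
  have hsq : ‖u - v‖ ^ 2 = 2 - 2 * RCLike.re ⟪u, v⟫_𝕜 := by
    rw [@norm_sub_sq 𝕜, hu, hv]
    ring
  have hre : -RCLike.re (⟪u, v⟫_𝕜 - 1) ≤ ‖⟪u, v⟫_𝕜 - 1‖ :=
    (neg_le_abs _).trans (RCLike.abs_re_le_norm _)
  rw [map_sub, RCLike.one_re] at hre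
  linarith

theorem norm_sub_le_sqrt_of_norm_eq_one {u v : E} (hu : ‖u‖ = 1) (hv : ‖v‖ = 1) :
    ‖u - v‖ ≤ √(2 * ‖⟪u, v⟫_𝕜 - 1‖) :=
  Real.le_sqrt_of_sq_le (norm_sub_sq_le_two_mul_norm_inner_sub_one hu hv)

theorem norm_inner_sub_inner_le (a b c d : E) :
    ‖⟪a, b⟫_𝕜 - ⟪c, d⟫_𝕜‖ ≤ ‖a - c‖ * ‖b‖ + ‖c‖ * ‖b - d‖ := by
  have hsplit : ⟪a, b⟫_𝕜 - ⟪c, d⟫_𝕜 = ⟪a - c, b⟫_𝕜 + ⟪c, b - d⟫_𝕜 := by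
    rw [inner_sub_left, inner_sub_right]
    ring
  rw [hsplit]
  exact (norm_add_le _ _).trans (add_le_add (norm_inner_le_norm _ _) (norm_inner_le_norm _ _))

theorem norm_inner_sub_inner_le_sqrt_add_sqrt {a b c d : E} (ha : ‖a‖ = 1) (hb : ‖b‖ = 1)
    (hc : ‖c‖ = 1) (hd : ‖d‖ = 1) :
    ‖⟪a, b⟫_𝕜 - ⟪c, d⟫_𝕜‖ ≤ √(2 * ‖⟪a, c⟫_𝕜 - 1‖) + √(2 * ‖⟪b, d⟫_𝕜 - 1‖) := by
  calc ‖⟪a, b⟫_𝕜 - ⟪c, d⟫_𝕜‖ ≤ ‖a - c‖ * ‖b‖ + ‖c‖ * ‖b - d‖ := norm_inner_sub_inner_le a b c d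
    _ = ‖a - c‖ + ‖b - d‖ := by rw [hb, hc, mul_one, one_mul]
    _ ≤ _ := add_le_add (norm_sub_le_sqrt_of_norm_eq_one ha hc)
        (norm_sub_le_sqrt_of_norm_eq_one hb hd)

end UnitVectors

theorem stmt15_general {G H : Type*} [Group G] [NormedAddCommGroup H] [InnerProductSpace ℂ H]
    (F : G → H) (hF : ∀ s, ‖F s‖ = 1)
    (θ : G → G → ℂ) (hθ : ∀ s t, θ s t = ⟪F s, F t⟫_ℂ)
    (ε : ℝ)
    (ha : ∀ g x y : G, ‖θ (g * x) (g * y) - θ x y‖ ≤ ε)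
    (x y : G)
    (hb : ‖θ y 1 - 1‖ < ε)
    (hc : ‖θ (y⁻¹ * x * y) 1 - 1‖ < ε) :
    ‖θ x 1 - 1‖ < 2 * ε + 4 * Real.sqrt ε := by
  have hxy : ‖θ (x * y) x - 1‖ ≤ 2 * ε := by
    have := ha x y 1
    rw [mul_one] at this
    linarith [norm_sub_le_norm_sub_add_norm_sub (θ (x * y) x) (θ y 1) 1]
  have hconj : ‖θ (x * y) y - θ (y⁻¹ * x * y) 1‖ ≤ ε := by
    simpa [mul_assoc] using ha y (y⁻¹ * x * y) 1
  have hsqrt : √(2 * (2 * ε)) = 2 * √ε := by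
    rw [← mul_assoc, Real.sqrt_mul' _ (by linarith [norm_nonneg (θ y 1 - 1)])]
    norm_num [show (4 : ℝ) = 2 ^ 2 by norm_num]
  have hshift : ‖θ x 1 - θ (x * y) y‖ ≤ 4 * √ε := by
    rw [norm_sub_rev]
    calc _ ≤ √(2 * ‖θ (x * y) x - 1‖) + √(2 * ‖θ y 1 - 1‖) := by
          simpa only [hθ] using norm_inner_sub_inner_le_sqrt_add_sqrt (hF _) (hF y) (hF x) (hF 1)
      _ ≤ √(2 * (2 * ε)) + √(2 * (2 * ε)) := by gcongr; linarith [norm_nonneg (θ y 1 - 1)]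
      _ = 4 * √ε := by rw [hsqrt]; ring
  linarith [norm_sub_le_norm_sub_add_norm_sub (θ x 1) (θ (x * y) y) 1,
    norm_sub_le_norm_sub_add_norm_sub (θ (x * y) y) (θ (y⁻¹ * x * y) 1) 1]

theorem stmt15 {G H : Type*} [Group G] [NormedAddCommGroup H] [InnerProductSpace ℂ H]
    (F : G → H) (hF : ∀ s, ‖F s‖ = 1)
    (θ : G → G → ℂ) (hθ : ∀ s t, θ s t = ⟪F s, F t⟫_ℂ)
    (ε : ℝ) (hε : 0 < ε)
    (ha : ∀ g x y : G, ‖θ (g * x) (g * y) - θ x y‖ ≤ ε)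
    (x y : G)
    (hb : ‖θ y 1 - 1‖ < ε)
    (hc : ‖θ (y⁻¹ * x * y) 1 - 1‖ < ε) :
    ‖θ x 1 - 1‖ < 2 * ε + 4 * Real.sqrt ε :=
  stmt15_general F hF θ hθ ε ha x y hb hc
end

section
/- Let Γ be a group generated by a family of subsets {S_i}_{i∈I} with bounded generation: every element of Γ is a product of at most l elements from ⋃_i S_i. Let θ be a normalized positive definite kernel on Γ with |θ(gx, gy) − θ(x,y)| ≤ δ for all g,x,y and |θ(s,1) − 1| < ε for all s ∈ ⋃_i S_i, where δ ≤ ε. Then |θ(x,1) − 1| < 2 l ε^{1/2} for all x ∈ Γ (assuming ε ≤ 1). -/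
/-!
Write `θ x y = ⟪F x, F y⟫` with unit vectors `F x`. For unit vectors,
`‖u - v‖² = 2 Re (1 - ⟪u, v⟫)`, so `|θ(gs, 1) - θ(g, 1)|² ≤ ‖F(gs) - F(g)‖² ≤ 2 |1 - θ(gs, g)|`,
and almost invariance together with `|θ(s, 1) - 1| < ε` gives `|1 - θ(gs, g)| < δ + ε ≤ 2ε`.
Hence right multiplication by a generator moves `θ(·, 1)` by less than `2 √ε`, and telescoping
along a word of length at most `l`, starting from `θ(1, 1) = 1`, gives the bound.
-/

open scoped InnerProductSpace

section UnitVectors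

variable {𝕜 E : Type*} [RCLike 𝕜] [SeminormedAddCommGroup E] [InnerProductSpace 𝕜 E]

theorem norm_sub_sq_le_two_mul_norm_one_sub_inner {u v : E} (hu : ‖u‖ = 1) (hv : ‖v‖ = 1) :
    ‖u - v‖ ^ 2 ≤ 2 * ‖1 - ⟪u, v⟫_𝕜‖ := by
  have hre := RCLike.re_le_norm (1 - ⟪u, v⟫_𝕜)
  rw [map_sub, RCLike.one_re] at hre
  rw [@norm_sub_sq 𝕜, hu, hv]
  linarith

theorem norm_inner_sub_inner_sq_le {u v w : E} (hu : ‖u‖ = 1) (hv : ‖v‖ = 1) (hw : ‖w‖ = 1) :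
    ‖⟪u, w⟫_𝕜 - ⟪v, w⟫_𝕜‖ ^ 2 ≤ 2 * ‖1 - ⟪u, v⟫_𝕜‖ :=
  calc ‖⟪u, w⟫_𝕜 - ⟪v, w⟫_𝕜‖ ^ 2 ≤ ‖u - v‖ ^ 2 := by
        rw [← inner_sub_left]
        gcongr
        simpa [hw] using norm_inner_le_norm (𝕜 := 𝕜) (u - v) w
    _ ≤ 2 * ‖1 - ⟪u, v⟫_𝕜‖ :=
      norm_sub_sq_le_two_mul_norm_one_sub_inner hu hv

end UnitVectors

theorem dist_mul_prod_lt_length_mul {Γ X : Type*} [Monoid Γ] [PseudoMetricSpace X]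
    {f : Γ → X} {T : Set Γ} {c : ℝ} (hstep : ∀ g, ∀ s ∈ T, dist (f (g * s)) (f g) < c) :
    ∀ L : List Γ, L ≠ [] → (∀ s ∈ L, s ∈ T) → ∀ g,
      dist (f (g * L.prod)) (f g) < L.length * c
  | [], hne, _, _ => absurd rfl hne
  | [s], _, hL, g => by simpa using hstep g s (hL s (by simp))
  | s :: t :: L, _, hL, g => by
    have htail := dist_mul_prod_lt_length_mul hstep (t :: L) (List.cons_ne_nil t L)
      (fun r hr => hL r (List.mem_cons_of_mem s hr)) (g * s)
    have hhead := hstep g s (hL s List.mem_cons_self)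
    calc dist (f (g * (s :: t :: L).prod)) (f g)
        ≤ dist (f (g * s * (t :: L).prod)) (f (g * s)) + dist (f (g * s)) (f g) := by
          rw [List.prod_cons, ← mul_assoc]; exact dist_triangle _ _ _
      _ < (t :: L).length * c + c := add_lt_add htail hhead
      _ = (s :: t :: L).length * c := by simp only [List.length_cons]; push_cast; ring

theorem dist_inner_mul_one_lt_two_mul_sqrt {Γ 𝕜 E : Type*} [Group Γ] [RCLike 𝕜]
    [SeminormedAddCommGroup E] [InnerProductSpace 𝕜 E] {F : Γ → E} (hF : ∀ g, ‖F g‖ = 1)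
    {ε δ : ℝ} (hδε : δ ≤ ε)
    (hinv : ∀ g x y : Γ, ‖⟪F (g * x), F (g * y)⟫_𝕜 - ⟪F x, F y⟫_𝕜‖ ≤ δ)
    {s : Γ} (hs : ‖⟪F s, F 1⟫_𝕜 - 1‖ < ε) (g : Γ) :
    dist ⟪F (g * s), F 1⟫_𝕜 ⟪F g, F 1⟫_𝕜 < 2 * √ε := by
  have hε : 0 ≤ ε := (norm_nonneg _).trans hs.le
  have hnear : ‖1 - ⟪F (g * s), F g⟫_𝕜‖ < 2 * ε := by
    have hshift := hinv g s 1
    rw [mul_one] at hshift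
    calc ‖1 - ⟪F (g * s), F g⟫_𝕜‖
        ≤ ‖1 - ⟪F s, F 1⟫_𝕜‖ + ‖⟪F s, F 1⟫_𝕜 - ⟪F (g * s), F g⟫_𝕜‖ :=
          norm_sub_le_norm_sub_add_norm_sub _ _ _
      _ < ε + δ :=
          add_lt_add_of_lt_of_le (by rwa [norm_sub_rev]) (by rwa [norm_sub_rev])
      _ ≤ 2 * ε := by linarith
  rw [dist_eq_norm]
  refine lt_of_pow_lt_pow_left₀ 2 (by positivity) ?_
  calc ‖⟪F (g * s), F 1⟫_𝕜 - ⟪F g, F 1⟫_𝕜‖ ^ 2 ≤ 2 * ‖1 - ⟪F (g * s), F g⟫_𝕜‖ :=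
        norm_inner_sub_inner_sq_le (hF _) (hF _) (hF _)
    _ < 2 * (2 * ε) := by gcongr
    _ = (2 * √ε) ^ 2 := by rw [mul_pow, Real.sq_sqrt hε]; ring

theorem stmt17_general {Γ H I : Type*} [Group Γ] [NormedAddCommGroup H] [InnerProductSpace ℂ H]
    (S : I → Set Γ) (l : ℕ) (hl : 1 ≤ l)
    (hgen : ∀ x : Γ, ∃ (k : ℕ) (w : Fin k → Γ), k ≤ l ∧
      (∀ i, w i ∈ ⋃ i, S i) ∧ x = (List.ofFn w).prod)
    (F : Γ → H) (hF : ∀ s, ‖F s‖ = 1)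
    (θ : Γ → Γ → ℂ) (hθ : ∀ s t, θ s t = ⟪F s, F t⟫_ℂ)
    (ε δ : ℝ) (hδε : δ ≤ ε) (hε0 : 0 < ε)
    (hinv : ∀ g x y : Γ, ‖θ (g * x) (g * y) - θ x y‖ ≤ δ)
    (hS : ∀ s ∈ ⋃ i, S i, ‖θ s 1 - 1‖ < ε) :
    ∀ x : Γ, ‖θ x 1 - 1‖ < 2 * l * Real.sqrt ε := by
  obtain rfl : θ = fun s t => ⟪F s, F t⟫_ℂ := funext₂ hθ
  have hone : ⟪F 1, F 1⟫_ℂ = 1 := by rw [inner_self_eq_norm_sq_to_K, hF]; norm_num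
  intro x
  obtain ⟨k, w, hk, hw, rfl⟩ := hgen x
  rcases Nat.eq_zero_or_pos k with rfl | hk0
  · simp only [List.ofFn_zero, List.prod_nil, hone, sub_self, norm_zero]
    have hl' : (0 : ℝ) < l := by exact_mod_cast hl
    positivity
  have hword := dist_mul_prod_lt_length_mul (f := fun g => ⟪F g, F 1⟫_ℂ)
    (fun g s hs => dist_inner_mul_one_lt_two_mul_sqrt hF hδε hinv (hS s hs) g)
    (List.ofFn w) (by simpa using hk0.ne') (by simpa [List.mem_ofFn] using hw) 1
  simp only [one_mul, hone, dist_eq_norm, List.length_ofFn] at hword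
  calc _ < k * (2 * √ε) := hword
    _ ≤ l * (2 * √ε) := by gcongr
    _ = 2 * l * √ε := by ring

theorem stmt17 {Γ H I : Type*} [Group Γ] [NormedAddCommGroup H] [InnerProductSpace ℂ H]
    (S : I → Set Γ) (l : ℕ) (hl : 1 ≤ l)
    (hgen : ∀ x : Γ, ∃ (k : ℕ) (w : Fin k → Γ), k ≤ l ∧
      (∀ i, w i ∈ ⋃ i, S i) ∧ x = (List.ofFn w).prod)
    (F : Γ → H) (hF : ∀ s, ‖F s‖ = 1)
    (θ : Γ → Γ → ℂ) (hθ : ∀ s t, θ s t = ⟪F s, F t⟫_ℂ)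
    (ε δ : ℝ) (hδε : δ ≤ ε) (hε0 : 0 < ε) (hε1 : ε ≤ 1)
    (hinv : ∀ g x y : Γ, ‖θ (g * x) (g * y) - θ x y‖ ≤ δ)
    (hS : ∀ s ∈ ⋃ i, S i, ‖θ s 1 - 1‖ < ε) :
    ∀ x : Γ, ‖θ x 1 - 1‖ < 2 * l * Real.sqrt ε :=
  stmt17_general S l hl hgen F hF θ hθ ε δ hδε hε0 hinv hS
end
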